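/- arXiv:0706.2844 — 2 statements merged into one kernel-verified Lean document; each statement's English description precedes it below -/
import Mathlib

section
/- For any finite connected subgraph G' = (V', E') of a graph, the combinatorial Laplacian H^N(G') = D(G') - A(G') satisfies: its smallest nonzero eigenvalue λ^N(G') is at least 2 / (|V'| · diam(G')), and in particular at least 2/|V'|². -/
/-!
If `L φ = μ φ` with `μ ≠ 0`, then `φ` is orthogonal to the constants, so its maximum `M` is
positive and its minimum `m` negative, and `∑ φ² ≤ |V| M (-m)` because each `(φ x - M)(φ x - m)`
is nonpositive. Along a shortest path from a maximum to a minimum, Cauchy–Schwarz gives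
`(M - m)² ≤ diam G · ∑_{x ~ y} (φ x - φ y)² = diam G · 2μ ∑ φ²`. Combining with
`4 M (-m) ≤ (M - m)²` yields `2 ≤ μ |V| diam G`, and `diam G < |V|`.
-/

open scoped BigOperators Classical

open Finset Matrix

theorem sum_sq_le_card_mul_of_sum_eq_zero {ι : Type*} [Fintype ι] {f : ι → ℝ} {m M : ℝ}
    (hsum : ∑ i, f i = 0) (hm : ∀ i, m ≤ f i) (hM : ∀ i, f i ≤ M) :
    ∑ i, f i ^ 2 ≤ Fintype.card ι * (M * -m) := by
  have h : ∀ i, f i ^ 2 ≤ (M + m) * f i - M * m := fun i => by nlinarith [hm i, hM i]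
  calc ∑ i, f i ^ 2 ≤ ∑ i, ((M + m) * f i - M * m) := sum_le_sum fun i _ => h i
    _ = Fintype.card ι * (M * -m) := by
      rw [sum_sub_distrib, ← mul_sum, hsum, sum_const, card_univ, nsmul_eq_mul]; ring

namespace SimpleGraph

variable {V : Type*} {G : SimpleGraph V}

theorem Walk.sum_darts_sub {R : Type*} [AddCommGroup R] (φ : V → R) {u v : V}
    (p : G.Walk u v) : (p.darts.map fun d => φ d.fst - φ d.snd).sum = φ u - φ v := by
  induction p with
  | nil => simp
  | cons h p ih =>
    simp only [Walk.darts_cons, List.map_cons, List.sum_cons, ih]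
    abel

theorem Walk.IsPath.sq_sub_le_length_mul_sum_sq [DecidableEq V] {u v : V} {p : G.Walk u v}
    (hp : p.IsPath) (φ : V → ℝ) :
    (φ u - φ v) ^ 2 ≤ p.length * ∑ d ∈ p.darts.toFinset, (φ d.fst - φ d.snd) ^ 2 := by
  have hnodup : p.darts.Nodup := Walk.darts_nodup_of_support_nodup hp.support_nodup
  rw [← p.sum_darts_sub, ← List.sum_toFinset _ hnodup, ← p.length_darts,
    ← List.toFinset_card_of_nodup hnodup]
  exact sq_sum_le_card_mul_sum_sq

theorem sum_dart_le_sum_adj [Fintype V] [DecidableRel G.Adj] (s : Finset G.Dart)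
    {f : V → V → ℝ} (hf : ∀ i j, 0 ≤ f i j) :
    ∑ d ∈ s, f d.fst d.snd ≤ ∑ i, ∑ j, if G.Adj i j then f i j else 0 := by
  rw [← Fintype.sum_prod_type' (fun i j => if G.Adj i j then f i j else 0), ← sum_filter]
  refine (sum_map s ⟨Dart.toProd, Dart.toProd_injective⟩ fun q => f q.1 q.2).symm.trans_le ?_
  refine sum_le_sum_of_subset_of_nonneg (fun q hq => ?_) fun q _ _ => hf q.1 q.2
  obtain ⟨d, -, rfl⟩ := mem_map.mp hq
  exact mem_filter.mpr ⟨mem_univ _, d.adj⟩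

theorem Connected.dist_lt_card [Fintype V] (hconn : G.Connected) (u v : V) :
    G.dist u v < Fintype.card V := by
  obtain ⟨p, hp, hlen⟩ := hconn.exists_path_of_dist u v
  exact hlen ▸ hp.length_lt

section Laplacian

variable [Fintype V] [DecidableEq V] [DecidableRel G.Adj]

theorem lapMatrix_mulVec_apply_eq_finsum (φ : V → ℝ) (x : V) :
    (G.lapMatrix ℝ *ᵥ φ) x =
      Nat.card (G.neighborSet x) * φ x - ∑ᶠ y ∈ G.neighborSet x, φ y := by
  rw [lapMatrix_mulVec_apply, Nat.card_eq_fintype_card, card_neighborSet_eq_degree,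
    ← finsum_mem_coe_finset, coe_neighborFinset]

theorem sum_lapMatrix_mulVec {R : Type*} [CommRing R] (φ : V → R) :
    ∑ i, (G.lapMatrix R *ᵥ φ) i = 0 := by
  calc ∑ i, (G.lapMatrix R *ᵥ φ) i = (fun _ => 1) ⬝ᵥ (G.lapMatrix R *ᵥ φ) := by
        simp [dotProduct]
    _ = ((G.lapMatrix R)ᵀ *ᵥ fun _ => 1) ⬝ᵥ φ := by rw [dotProduct_mulVec, mulVec_transpose]
    _ = 0 := by rw [(G.isSymm_lapMatrix R).eq, lapMatrix_mulVec_const_eq_zero, zero_dotProduct]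

variable {μ : ℝ} {φ : V → ℝ}

theorem sum_eq_zero_of_lapMatrix_mulVec_eq_smul (heig : G.lapMatrix ℝ *ᵥ φ = μ • φ)
    (hμ : μ ≠ 0) : ∑ i, φ i = 0 := by
  have h := G.sum_lapMatrix_mulVec φ
  rw [heig] at h
  simp only [Pi.smul_apply, smul_eq_mul, ← mul_sum] at h
  exact (mul_eq_zero.mp h).resolve_left hμ

theorem sum_adj_sq_sub_eq_of_lapMatrix_mulVec_eq_smul (heig : G.lapMatrix ℝ *ᵥ φ = μ • φ) :
    ∑ i, ∑ j, (if G.Adj i j then (φ i - φ j) ^ 2 else 0) = 2 * μ * ∑ i, φ i ^ 2 := by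
  have h := G.lapMatrix_toLinearMap₂' ℝ φ
  rw [toLinearMap₂'_apply', heig, dotProduct_smul, smul_eq_mul] at h
  simp only [dotProduct, ← sq] at h
  linarith

theorem eigenvalue_nonneg_of_lapMatrix_mulVec_eq_smul (hφ : φ ≠ 0)
    (heig : G.lapMatrix ℝ *ᵥ φ = μ • φ) : 0 ≤ μ := by
  have hpos : 0 < ∑ i, φ i ^ 2 := by
    obtain ⟨i, hi⟩ := Function.ne_iff.mp hφ
    exact sum_pos' (fun j _ => sq_nonneg _) ⟨i, mem_univ i, pow_two_pos_of_ne_zero hi⟩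
  have henergy : 0 ≤ 2 * μ * ∑ i, φ i ^ 2 := by
    rw [← sum_adj_sq_sub_eq_of_lapMatrix_mulVec_eq_smul heig]
    exact sum_nonneg fun i _ => sum_nonneg fun j _ => by split_ifs <;> positivity
  nlinarith

theorem two_le_eigenvalue_mul_card_mul_of_dist_le (hconn : G.Connected) (hφ : φ ≠ 0)
    (heig : G.lapMatrix ℝ *ᵥ φ = μ • φ) (hμ : μ ≠ 0) {D : ℕ} (hD : ∀ u v, G.dist u v ≤ D) :
    2 ≤ μ * (Fintype.card V * D) := by
  have hsum := sum_eq_zero_of_lapMatrix_mulVec_eq_smul heig hμ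
  obtain ⟨w, hw⟩ := Function.ne_iff.mp hφ
  have : Nonempty V := ⟨w⟩
  obtain ⟨u, hu⟩ := Finite.exists_max φ
  obtain ⟨v, hv⟩ := Finite.exists_min φ
  have hφu : 0 < φ u := by
    obtain ⟨i, -, hi⟩ := exists_pos_of_sum_zero_of_exists_nonzero φ hsum ⟨w, mem_univ w, hw⟩
    exact hi.trans_le (hu i)
  have hφv : φ v < 0 := by
    obtain ⟨i, -, hi⟩ := exists_pos_of_sum_zero_of_exists_nonzero (s := univ) (-φ)
      (by simp [hsum]) ⟨w, mem_univ w, neg_ne_zero.mpr hw⟩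
    exact (hv i).trans_lt (neg_pos.mp hi)
  obtain ⟨p, hp, hlen⟩ := hconn.exists_path_of_dist u v
  have hspread : (φ u - φ v) ^ 2 ≤ D * (2 * μ * (Fintype.card V * (φ u * -φ v))) :=
    calc (φ u - φ v) ^ 2
        ≤ p.length * ∑ d ∈ p.darts.toFinset, (φ d.fst - φ d.snd) ^ 2 :=
          hp.sq_sub_le_length_mul_sum_sq φ
      _ ≤ D * ∑ i, ∑ j, (if G.Adj i j then (φ i - φ j) ^ 2 else 0) := by
          gcongr
          · exact_mod_cast hlen ▸ hD u v
          · exact sum_dart_le_sum_adj _ fun i j => sq_nonneg (φ i - φ j)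
      _ ≤ D * (2 * μ * (Fintype.card V * (φ u * -φ v))) := by
          rw [sum_adj_sq_sub_eq_of_lapMatrix_mulVec_eq_smul heig]
          have hμ0 := eigenvalue_nonneg_of_lapMatrix_mulVec_eq_smul hφ heig
          gcongr
          exact sum_sq_le_card_mul_of_sum_eq_zero hsum hv hu
  nlinarith [sq_nonneg (φ u + φ v), mul_pos hφu (neg_pos.mpr hφv)]

end Laplacian

end SimpleGraph

/-- For a finite connected graph `G`, every nonzero eigenvalue `μ` of the
combinatorial Laplacian `H^N` (acting by `(H^N φ) x = deg x * φ x - ∑_{y ~ x} φ y`) satisfies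
`μ ≥ 2 / (|V| * diam G)` and in particular `μ ≥ 2 / |V|^2`. -/
theorem smallest_nonzero_eigenvalue_combinatorial_laplacian_lower_bound
    {V : Type*} [Fintype V] (G : SimpleGraph V) (hconn : G.Connected)
    (μ : ℝ) (φ : V → ℝ) (hφ : φ ≠ 0)
    (heig : ∀ x : V,
      (Nat.card (G.neighborSet x) : ℝ) * φ x - ∑ᶠ y ∈ G.neighborSet x, φ y = μ * φ x)
    (hμ : μ ≠ 0) :
    2 / ((Fintype.card V : ℝ) * (Finset.univ.sup fun p : V × V => G.dist p.1 p.2 : ℕ)) ≤ μ ∧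
    2 / ((Fintype.card V : ℝ) ^ 2) ≤ μ := by
  set D := Finset.univ.sup fun p : V × V => G.dist p.1 p.2
  have heig' : G.lapMatrix ℝ *ᵥ φ = μ • φ :=
    funext fun x => (G.lapMatrix_mulVec_apply_eq_finsum φ x).trans (heig x)
  have hkey : 2 ≤ μ * (Fintype.card V * D) :=
    G.two_le_eigenvalue_mul_card_mul_of_dist_le hconn hφ heig' hμ
      fun u v => le_sup (f := fun p : V × V => G.dist p.1 p.2) (mem_univ (u, v))
  have hμ0 := G.eigenvalue_nonneg_of_lapMatrix_mulVec_eq_smul hφ heig'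
  have hnD : 0 < (Fintype.card V : ℝ) * D := pos_of_mul_pos_right (by linarith) hμ0
  have hDn : (D : ℝ) ≤ Fintype.card V := by
    exact_mod_cast Finset.sup_le fun (p : V × V) _ => (hconn.dist_lt_card p.1 p.2).le
  have hfirst : 2 / ((Fintype.card V : ℝ) * D) ≤ μ := by
    rw [div_le_iff₀ hnD]; linarith
  refine ⟨hfirst, le_trans ?_ hfirst⟩
  rw [sq]
  gcongr
end

section
/- Let G be a quasi-transitive graph with subcritical site percolation such that cluster sizes decay exponentially: P(|C_x(ω)| ≥ n) ≤ e^{−a_p n} for all vertices x and positive integers n. Assume there is a continuous strictly decreasing function f: [1,∞) → ℝ⁺ with lim_{s→∞} f(s) = 0 such that every finite cluster C satisfies λ^#(C) ≥ f(|C|) (the smallest nonzero eigenvalue of the percolation Laplacian on C). Then the integrated density of states satisfies N^#(E) − N^#(0) ≤ e^{−a_p f^{−1}(E)} for all E ∈ (0, f(1)). -/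
open scoped BigOperators Classical Pointwise
open MeasureTheory ProbabilityTheory Filter

noncomputable section

variable {V : Type*}

/-- The subgraph of `G` kept by the site-percolation configuration `ω` (an edge is retained
iff both of its endpoints are open). -/
def percGraph (G : SimpleGraph V) (ω : V → Bool) : SimpleGraph V where
  Adj x y := G.Adj x y ∧ ω x = true ∧ ω y = true
  symm := ⟨fun _ _ h => ⟨h.1.symm, h.2.2, h.2.1⟩⟩
  loopless := ⟨fun x h => G.loopless.irrefl x h.1⟩

/-- The percolation cluster of the vertex `x` in the configuration `ω` (empty if `x` is closed). -/
def cluster (G : SimpleGraph V) (ω : V → Bool) (x : V) : Set V :=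
  {y | ω x = true ∧ (percGraph G ω).Reachable x y}

/-- `⟨δ_x, χ_{(−∞,E]}(M) δ_x⟩`, the diagonal matrix element of the spectral projection up to
energy `E` of the finite hermitian matrix `M` indexed by `C` (junk value `0` otherwise). -/
def specDiag (C : Set V) (M : Matrix C C ℝ) (x : V) (E : ℝ) : ℝ :=
  if h : C.Finite ∧ M.IsHermitian ∧ x ∈ C then
    haveI : Fintype C := h.1.fintype
    ∑ i, if h.2.1.eigenvalues i ≤ E then (h.2.1.eigenvectorBasis i) ⟨x, h.2.2⟩ ^ 2 else 0
  else 0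

/-- The integrated density of states
`N(E) = |F|⁻¹ ∑_{x ∈ F} 𝔼[⟨δ_x, χ_{(−∞,E]}(H(C_x(ω))) δ_x⟩]` of the random operator whose
restriction to a cluster `C` is given by the matrix `Hmat C` (valid whenever the clusters are
almost surely finite, so that the percolation Hamiltonian is the direct sum of its restrictions
to the clusters). -/
def IDS (G : SimpleGraph V) (Pr : Measure (V → Bool))
    (Hmat : ∀ C : Set V, Matrix C C ℝ) (F : Finset V) (E : ℝ) : ℝ :=
  (F.card : ℝ)⁻¹ * ∑ x ∈ F, ∫ ω, specDiag (cluster G ω x) (Hmat (cluster G ω x)) x E ∂Pr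

/-- The combinatorial (Neumann) Laplacian `H^N = D − A` of the subgraph of `G` induced by `C`. -/
def lapNMat (G : SimpleGraph V) (C : Set V) : Matrix C C ℝ := fun a b =>
  (if a = b then (Nat.card ↥(C ∩ G.neighborSet ↑a) : ℝ) else 0) -
    (if G.Adj ↑a ↑b then 1 else 0)

/-- The adjacency Laplacian `H^A = k·Id − A` of the subgraph of `G` induced by `C`. -/
def lapAMat (G : SimpleGraph V) (k : ℕ) (C : Set V) : Matrix C C ℝ := fun a b =>
  (if a = b then (k : ℝ) else 0) - (if G.Adj ↑a ↑b then 1 else 0)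

/-- The Dirichlet Laplacian `H^D = 2k·Id − D − A` of the subgraph of `G` induced by `C`. -/
def lapDMat (G : SimpleGraph V) (k : ℕ) (C : Set V) : Matrix C C ℝ := fun a b =>
  (if a = b then 2 * (k : ℝ) - (Nat.card ↥(C ∩ G.neighborSet ↑a) : ℝ) else 0) -
    (if G.Adj ↑a ↑b then 1 else 0)

/-- The event that the finite set `C` is (the vertex set of) a cluster of the site-percolation
graph: all vertices of `C` are open and every vertex adjacent to `C` but outside `C` is closed. -/
def isClusterOf (G : SimpleGraph V) (ω : V → Bool) (C : Set V) : Prop :=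
  (∀ y ∈ C, ω y = true) ∧ ∀ z ∉ C, (∃ y ∈ C, G.Adj y z) → ω z = false

end

/-!
If `|C_x| < f⁻¹(E)`, every nonzero eigenvalue of the cluster Hamiltonian is at least
`f(|C_x|) > E`, so the spectral projections onto `(-∞, E]` and `(-∞, 0]` have the same diagonal
entry at `x`. These entries lie in `[0, 1]`, hence `N(E) - N(0)` is at most the average over `F`
of `P(|C_x| ≥ f⁻¹(E)) ≤ exp(-a f⁻¹(E))`.

The integrals are only meaningful once `ω ↦ C_x(ω)` is shown to be almost surely measurable.
A measurable event of `{0,1}^V` depends on countably many coordinates; opening `n` neighbours of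
a vertex of uncountable degree while avoiding those coordinates shows that, under the tail bound,
`C_x` is almost surely finite with all its vertices of countable degree. It then takes values in
a countable family of finite connected sets `C`, and `{C_x = C}` is the cylinder event that `C`
is open and its (countable) outer boundary closed.
-/

/-- Eigenvalues in the sense of the hypothesis on `λ^#(C)`; `∑ᶠ` avoids a `Fintype` instance on the
index type. -/
def IsMatrixEigenvalue {ι : Type*} (M : Matrix ι ι ℝ) (μ : ℝ) : Prop :=
  ∃ φ : ι → ℝ, φ ≠ 0 ∧ ∀ i, ∑ᶠ j, M i j * φ j = μ * φ i

namespace Matrix.IsHermitian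

variable {ι : Type*} [Fintype ι] [DecidableEq ι] {M : Matrix ι ι ℝ}

lemma sum_sq_eigenvectorBasis_apply (hM : M.IsHermitian) (j : ι) :
    ∑ i, hM.eigenvectorBasis i j ^ 2 = 1 := by
  simpa [EuclideanSpace.inner_single_right] using
    hM.eigenvectorBasis.sum_sq_inner_right (EuclideanSpace.single j (1 : ℝ))

lemma isMatrixEigenvalue_eigenvalues (hM : M.IsHermitian) (i : ι) :
    IsMatrixEigenvalue M (hM.eigenvalues i) := by
  refine ⟨hM.eigenvectorBasis i, fun h => ?_, fun j => ?_⟩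
  · have := hM.eigenvectorBasis.orthonormal.1 i
    simp_all
  · simpa [finsum_eq_sum_of_fintype, mulVec, dotProduct] using
      congrFun (hM.mulVec_eigenvectorBasis i) j

end Matrix.IsHermitian

section SpectralProjection

variable {V : Type*} {C : Set V} {M : Matrix C C ℝ} {x : V}

lemma specDiag_nonneg (E : ℝ) : 0 ≤ specDiag C M x E := by
  unfold specDiag
  split
  · exact Finset.sum_nonneg fun i _ => by split <;> positivity
  · rfl

lemma specDiag_le_one (E : ℝ) : specDiag C M x E ≤ 1 := by
  unfold specDiag
  split
  next h =>
    let : Fintype C := h.1.fintype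
    calc _ ≤ ∑ i, h.2.1.eigenvectorBasis i ⟨x, h.2.2⟩ ^ 2 :=
          Finset.sum_le_sum fun i _ => by split <;> [exact le_rfl; positivity]
      _ = 1 := h.2.1.sum_sq_eigenvectorBasis_apply _
  · exact zero_le_one

lemma abs_specDiag_le_one (E : ℝ) : |specDiag C M x E| ≤ 1 :=
  abs_le.2 ⟨(specDiag_nonneg E).trans' (by norm_num), specDiag_le_one E⟩

lemma specDiag_of_notMem (hx : x ∉ C) (E : ℝ) : specDiag C M x E = 0 :=
  dif_neg fun h => hx h.2.2

lemma specDiag_eq_specDiag_zero {E : ℝ} (hE : 0 ≤ E)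
    (hgap : ∀ μ, μ ≠ 0 → IsMatrixEigenvalue M μ → E < μ) :
    specDiag C M x E = specDiag C M x 0 := by
  unfold specDiag
  split
  next h =>
    let : Fintype C := h.1.fintype
    refine Finset.sum_congr rfl fun i _ => if_congr ⟨fun hle => ?_, hE.trans'⟩ rfl rfl
    by_contra hpos
    exact (hgap _ (by linarith) (h.2.1.isMatrixEigenvalue_eigenvalues i)).not_ge hle
  · rfl

end SpectralProjection

section Percolation

variable {V : Type*} {G : SimpleGraph V} {ω ω' : V → Bool} {x y z : V} {C : Set V}

lemma percGraph_le : percGraph G ω ≤ G := fun _ _ h => h.1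

lemma percGraph_mono (h : ∀ v, ω v = true → ω' v = true) : percGraph G ω ≤ percGraph G ω' :=
  fun _ _ hab => ⟨hab.1, h _ hab.2.1, h _ hab.2.2⟩

lemma mem_cluster_self (hx : ω x = true) : x ∈ cluster G ω x := ⟨hx, .refl x⟩

lemma open_of_mem_cluster (hy : y ∈ cluster G ω x) : ω y = true := by
  obtain ⟨hx, ⟨w⟩⟩ := hy
  cases w.reverse with
  | nil => exact hx
  | cons h _ => exact h.2.1

lemma cluster_eq_empty_iff : cluster G ω x = ∅ ↔ ω x = false := by
  cases hx : ω x
  · simp [cluster, hx]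
  · simpa using Set.nonempty_iff_ne_empty.1 ⟨x, mem_cluster_self hx⟩

lemma cluster_mono (h : ∀ v, ω v = true → ω' v = true) : cluster G ω x ⊆ cluster G ω' x :=
  fun _ hy => ⟨h x hy.1, hy.2.mono (percGraph_mono h)⟩

lemma mem_cluster_of_adj (hy : y ∈ cluster G ω x) (hyz : G.Adj y z) (hz : ω z = true) :
    z ∈ cluster G ω x :=
  ⟨hy.1, hy.2.trans (SimpleGraph.Adj.reachable ⟨hyz, open_of_mem_cluster hy, hz⟩)⟩

lemma connected_induce_cluster (hx : ω x = true) : (G.induce (cluster G ω x)).Connected := by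
  refine G.induce_connected_of_patches x (mem_cluster_self hx) fun {v} hv => ?_
  obtain ⟨w⟩ := hv.2
  let p := w.mapLe percGraph_le
  have hsupp : {u | u ∈ p.support} ⊆ cluster G ω x := fun u hu =>
    ⟨hx, ⟨w.takeUntil u (by simpa [p, SimpleGraph.Walk.support_mapLe_eq_support] using hu)⟩⟩
  exact ⟨_, hsupp, p.start_mem_support, p.end_mem_support,
    p.connected_induce_support.preconnected _ _⟩

lemma cluster_subset_of_isClusterOf (hxC : x ∈ C) (h : isClusterOf G ω C) :
    cluster G ω x ⊆ C := by
  rintro y ⟨-, ⟨w⟩⟩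
  induction w with
  | nil => exact hxC
  | cons hadj _ ih =>
    refine ih ?_
    by_contra hz
    simpa [h.2 _ hz ⟨_, hxC, hadj.1⟩] using hadj.2.2

lemma subset_cluster_of_isClusterOf (hxC : x ∈ C) (hC : (G.induce C).Connected)
    (h : isClusterOf G ω C) : C ⊆ cluster G ω x := fun y hy =>
  let φ : G.induce C →g percGraph G ω := ⟨Subtype.val, fun {a b} hab => ⟨hab, h.1 _ a.2, h.1 _ b.2⟩⟩
  ⟨h.1 x hxC, (hC.preconnected ⟨x, hxC⟩ ⟨y, hy⟩).map φ⟩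

lemma cluster_eq_iff_isClusterOf (hxC : x ∈ C) (hC : (G.induce C).Connected) :
    cluster G ω x = C ↔ isClusterOf G ω C := by
  refine ⟨?_, fun h => (cluster_subset_of_isClusterOf hxC h).antisymm
    (subset_cluster_of_isClusterOf hxC hC h)⟩
  rintro rfl
  refine ⟨fun y hy => open_of_mem_cluster hy, fun z hz ⟨y, hy, hyz⟩ => ?_⟩
  by_contra hωz
  exact hz (mem_cluster_of_adj hy hyz (Bool.not_eq_false _ ▸ hωz))

end Percolation

theorem SimpleGraph.countable_setOf_reachable {W : Type*} {H : SimpleGraph W}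
    (h : ∀ v, (H.neighborSet v).Countable) (x : W) : {y | H.Reachable x y}.Countable := by
  let B (n : ℕ) : Set W := {y | ∃ p : H.Walk y x, p.length = n}
  have hB : ∀ n, (B n).Countable := by
    intro n
    induction n with
    | zero =>
      exact (Set.countable_singleton x).mono fun y ⟨p, hp⟩ => p.eq_of_length_eq_zero hp
    | succ n ih =>
      refine (ih.biUnion fun w _ => h w).mono fun y ⟨p, hp⟩ => ?_
      cases p with
      | nil => simp at hp
      | cons hyw q => exact Set.mem_biUnion (x := _) ⟨q, by simpa using hp⟩ hyw.symm
  refine (Set.countable_iUnion hB).mono fun y hy => ?_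
  obtain ⟨p⟩ := hy
  exact Set.mem_iUnion.2 ⟨_, p.reverse, rfl⟩

section Countability

variable {V : Type*} {G : SimpleGraph V}

lemma countable_setOf_finite_connected_subset {S : Set V}
    (hS : ∀ v ∈ S, (G.neighborSet v).Countable) (x : V) :
    {C : Set V | C.Finite ∧ x ∈ C ∧ C ⊆ S ∧ (G.induce C).Connected}.Countable := by
  by_cases hx : x ∈ S
  swap
  · exact Set.countable_empty.mono fun C hC => hx (hC.2.2.1 hC.2.1)
  have hH : ∀ v, ((G.induce S).neighborSet v).Countable := fun v =>
    (hS v v.2).preimage Subtype.val_injective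
  refine (Set.countable_ofPred_finite_subset
    (((G.induce S).countable_setOf_reachable hH ⟨x, hx⟩).image Subtype.val)).mono ?_
  rintro C ⟨hfin, hxC, hCS, hconn⟩
  refine ⟨hfin, fun y hy => ⟨⟨y, hCS hy⟩, ?_, rfl⟩⟩
  exact (hconn.preconnected ⟨x, hxC⟩ ⟨y, hy⟩).map (SimpleGraph.induceHomOfLE G hCS).toHom

lemma measurableSet_isClusterOf {C : Set V} (hC : C.Countable)
    (hdeg : ∀ y ∈ C, (G.neighborSet y).Countable) :
    MeasurableSet {ω : V → Bool | isClusterOf G ω C} := by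
  have hbd : {z | z ∉ C ∧ ∃ y ∈ C, G.Adj y z}.Countable :=
    (hC.biUnion hdeg).mono fun z ⟨_, y, hy, hyz⟩ => Set.mem_biUnion hy hyz
  convert (MeasurableSet.biInter hC fun y _ =>
      (measurableSet_singleton true).preimage (measurable_pi_apply y)).inter
    (MeasurableSet.biInter hbd fun z _ =>
      (measurableSet_singleton false).preimage (measurable_pi_apply z)) using 1
  ext ω
  simp [isClusterOf]

end Countability

theorem MeasureTheory.aestronglyMeasurable_comp_of_ae_mem_countable {Ω α β : Type*}
    [MeasurableSpace Ω] {μ : Measure Ω} [TopologicalSpace β]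
    [TopologicalSpace.PseudoMetrizableSpace β]
    {κ : Ω → α} {T : Set α} (hT : T.Countable)
    (hfib : ∀ c ∈ T, MeasurableSet (κ ⁻¹' {c})) (hae : ∀ᵐ ω ∂μ, κ ω ∈ T) (φ : α → β) :
    AEStronglyMeasurable (fun ω => φ (κ ω)) μ := by
  have := hT.to_subtype
  rw [← Measure.restrict_eq_self_of_ae_mem (s := κ ⁻¹' T) hae, ← Set.biUnion_preimage_singleton,
    Set.biUnion_eq_iUnion, aestronglyMeasurable_iUnion_iff]
  intro c
  refine (aestronglyMeasurable_const (b := φ c)).congr ?_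
  filter_upwards [ae_restrict_mem (hfib c c.2)] with ω hω
  rw [Set.mem_singleton_iff.1 hω]

section ClusterSize

variable {V : Type*} {G : SimpleGraph V} {ω : V → Bool} {x y : V}

def clusterSizeGe (G : SimpleGraph V) (x : V) (n : ℕ) : Set (V → Bool) :=
  {ω | (cluster G ω x).Infinite ∨ n ≤ Nat.card ↥(cluster G ω x)}

lemma exists_eqOn_mem_clusterSizeGe {W : Set V} (hW : W.Countable) (hy : y ∈ cluster G ω x)
    (hdeg : ¬(G.neighborSet y).Countable) (n : ℕ) :
    ∃ ω', Set.EqOn ω' ω W ∧ ω' ∈ clusterSizeGe G x n := by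
  have hinf : (G.neighborSet y \ W).Infinite := fun hfin =>
    hdeg ((hfin.countable.union hW).mono (Set.subset_sdiff_union _ _))
  obtain ⟨Z, hZ, hcard⟩ := hinf.exists_subset_card_eq n
  let ω' : V → Bool := fun v => if v ∈ Z then true else ω v
  have hmono : ∀ v, ω v = true → ω' v = true := fun v hv => by simp [ω', hv]
  have hZ' : (Z : Set V) ⊆ cluster G ω' x := fun z hz =>
    mem_cluster_of_adj (cluster_mono hmono hy) (hZ hz).1 (by simp [ω', Finset.mem_coe.1 hz])
  refine ⟨ω', fun v hv => if_neg fun hvZ => (hZ hvZ).2 hv, ?_⟩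
  rw [clusterSizeGe, Set.mem_ofPred_eq, or_iff_not_imp_left, Set.not_infinite]
  intro hfin
  rw [Nat.card_coe_set_eq, ← hcard, ← Set.ncard_coe_finset]
  exact Set.ncard_le_ncard hZ' hfin

variable {Pr : Measure (V → Bool)}

lemma tendsto_measure_clusterSizeGe_of_le_exp {a : ℝ} (ha : 0 < a)
    (hdec : ∀ n : ℕ, 1 ≤ n → Pr (clusterSizeGe G x n) ≤ ENNReal.ofReal (Real.exp (-a * n))) :
    Tendsto (fun n => Pr (clusterSizeGe G x n)) atTop (nhds 0) := by
  have hexp : Tendsto (fun n : ℕ => ENNReal.ofReal (Real.exp (-a * n))) atTop (nhds 0) :=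
    ENNReal.ofReal_zero ▸ ENNReal.tendsto_ofReal (Real.tendsto_exp_atBot.comp
      (tendsto_natCast_atTop_atTop.const_mul_atTop_of_neg (neg_lt_zero.2 ha)))
  exact tendsto_of_tendsto_of_tendsto_of_le_of_le' tendsto_const_nhds hexp
    (Eventually.of_forall fun _ => bot_le) ((eventually_ge_atTop 1).mono hdec)

lemma ae_cluster_finite_and_countable_degree
    (hdec : Tendsto (fun n => Pr (clusterSizeGe G x n)) atTop (nhds 0)) :
    ∀ᵐ ω ∂Pr, (cluster G ω x).Finite ∧ ∀ y ∈ cluster G ω x, (G.neighborSet y).Countable := by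
  rw [ae_iff]
  refine le_antisymm (ge_of_tendsto' hdec fun n => ?_) bot_le
  refine (measure_mono fun ω hω => ?_).trans (measure_toMeasurable _).le
  obtain ⟨I, t, hI, ht⟩ :=
    (measurableSet_toMeasurable Pr (clusterSizeGe G x n)).eq_preimage_restrict_countable
  rw [Set.mem_ofPred_eq, not_and_or, not_forall₂] at hω
  rcases hω with hinf | ⟨y, hy, hdeg⟩
  · exact subset_toMeasurable _ _ (Or.inl hinf)
  obtain ⟨ω', hω', hmem⟩ := exists_eqOn_mem_clusterSizeGe hI hy hdeg n
  have := subset_toMeasurable Pr _ hmem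
  have hres : I.domRestrict ω' = I.domRestrict ω := funext fun v => hω' v.2
  rw [ht, Set.mem_preimage, hres] at this
  rwa [ht]

lemma aestronglyMeasurable_comp_cluster {β : Type*} [TopologicalSpace β]
    [TopologicalSpace.PseudoMetrizableSpace β]
    (hdec : Tendsto (fun n => Pr (clusterSizeGe G x n)) atTop (nhds 0)) (φ : Set V → β) :
    AEStronglyMeasurable (fun ω => φ (cluster G ω x)) Pr := by
  refine aestronglyMeasurable_comp_of_ae_mem_countable
    ((countable_setOf_finite_connected_subset (S := {v | (G.neighborSet v).Countable})
      (fun _ hv => hv) x).insert ∅) ?_ ?_ φ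
  · rintro C (rfl | ⟨hfin, hxC, hCS, hconn⟩)
    · simp_rw [Set.preimage, Set.mem_singleton_iff, cluster_eq_empty_iff]
      exact (measurableSet_singleton false).preimage (measurable_pi_apply x)
    · simp_rw [Set.preimage, Set.mem_singleton_iff, cluster_eq_iff_isClusterOf hxC hconn]
      exact measurableSet_isClusterOf hfin.countable hCS
  · filter_upwards [ae_cluster_finite_and_countable_degree hdec] with ω ⟨hfin, hdeg⟩
    cases hx : ω x
    · exact Or.inl (cluster_eq_empty_iff.2 hx)
    · exact Or.inr ⟨hfin, mem_cluster_self hx, hdeg, connected_induce_cluster hx⟩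

end ClusterSize

section DensityOfStates

variable {V : Type*} {G : SimpleGraph V} {Pr : Measure (V → Bool)}
  {Hmat : ∀ C : Set V, Matrix C C ℝ} {x : V}

lemma IDS_eq_expect (F : Finset V) (E : ℝ) :
    IDS G Pr Hmat F E = 𝔼 x ∈ F, ∫ ω, specDiag (cluster G ω x) (Hmat (cluster G ω x)) x E ∂Pr := by
  rw [IDS, Finset.expect_eq_sum_div_card, inv_mul_eq_div]

variable {f : ℝ → ℝ}
  (heig : ∀ C : Set V, C.Finite → C.Nonempty → (G.induce C).Connected →
    ∀ μ : ℝ, μ ≠ 0 → IsMatrixEigenvalue (Hmat C) μ → f (Nat.card ↥C : ℝ) ≤ μ)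
include heig

lemma specDiag_cluster_eq_of_card_lt (hfanti : StrictAntiOn f (Set.Ici 1)) {s : ℝ} (hs : 1 ≤ s)
    (hfs : 0 < f s) {ω : V → Bool} (hfin : (cluster G ω x).Finite)
    (hcard : (Nat.card ↥(cluster G ω x) : ℝ) < s) :
    specDiag (cluster G ω x) (Hmat (cluster G ω x)) x (f s) =
      specDiag (cluster G ω x) (Hmat (cluster G ω x)) x 0 := by
  cases hx : ω x
  · have hx' : x ∉ cluster G ω x := by simp [cluster_eq_empty_iff.2 hx]
    rw [specDiag_of_notMem hx', specDiag_of_notMem hx']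
  refine specDiag_eq_specDiag_zero hfs.le fun μ hμ hev => ?_
  have hne : (cluster G ω x).Nonempty := ⟨x, mem_cluster_self hx⟩
  have : Finite ↥(cluster G ω x) := hfin
  have hcard_pos : (1 : ℝ) ≤ Nat.card ↥(cluster G ω x) := by
    have := hne.to_subtype
    exact_mod_cast Nat.card_pos (α := ↥(cluster G ω x))
  exact (hfanti hcard_pos hs hcard).trans_le
    (heig _ hfin hne (connected_induce_cluster hx) μ hμ hev)

lemma integral_specDiag_sub_le [IsProbabilityMeasure Pr] {a : ℝ} (ha : 0 < a)
    (hdec : ∀ n : ℕ, 1 ≤ n → Pr (clusterSizeGe G x n) ≤ ENNReal.ofReal (Real.exp (-a * n)))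
    (hfanti : StrictAntiOn f (Set.Ici 1)) {s : ℝ} (hs : 1 ≤ s) (hfs : 0 < f s) :
    (∫ ω, specDiag (cluster G ω x) (Hmat (cluster G ω x)) x (f s) ∂Pr) -
      ∫ ω, specDiag (cluster G ω x) (Hmat (cluster G ω x)) x 0 ∂Pr ≤ Real.exp (-a * s) := by
  let N (E : ℝ) (ω : V → Bool) : ℝ := specDiag (cluster G ω x) (Hmat (cluster G ω x)) x E
  have hint (E : ℝ) : Integrable (N E) Pr :=
    (integrable_const (1 : ℝ)).mono'
      (aestronglyMeasurable_comp_cluster (tendsto_measure_clusterSizeGe_of_le_exp ha hdec)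
        fun C => specDiag C (Hmat C) x E)
      (ae_of_all _ fun _ => abs_specDiag_le_one E)
  let n := ⌈s⌉₊
  let B := toMeasurable Pr (clusterSizeGe G x n)
  have hdiff (ω : V → Bool) : N (f s) ω - N 0 ω ≤ B.indicator 1 ω := by
    by_cases hω : ω ∈ B
    · rw [Set.indicator_of_mem hω, Pi.one_apply]
      have hE : N (f s) ω ≤ 1 := specDiag_le_one _
      have h0 : 0 ≤ N 0 ω := specDiag_nonneg _
      linarith
    have hsmall : ω ∉ clusterSizeGe G x n := fun h => hω (subset_toMeasurable _ _ h)
    simp only [clusterSizeGe, Set.mem_ofPred_eq, not_or, Set.not_infinite, not_le, n,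
      Nat.lt_ceil] at hsmall
    rw [Set.indicator_of_notMem hω, sub_nonpos]
    exact (specDiag_cluster_eq_of_card_lt heig hfanti hs hfs hsmall.1 hsmall.2).le
  have hn : 1 ≤ n := Nat.one_le_ceil_iff.2 (by linarith)
  calc (∫ ω, N (f s) ω ∂Pr) - ∫ ω, N 0 ω ∂Pr = ∫ ω, N (f s) ω - N 0 ω ∂Pr :=
        (integral_sub (hint _) (hint _)).symm
    _ ≤ ∫ ω, B.indicator 1 ω ∂Pr :=
        integral_mono ((hint _).sub (hint _))
          ((integrable_const 1).indicator (measurableSet_toMeasurable _ _)) hdiff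
    _ = (Pr (clusterSizeGe G x n)).toReal := by
        rw [integral_indicator_one (measurableSet_toMeasurable _ _), measureReal_def,
          measure_toMeasurable]
    _ ≤ Real.exp (-a * n) := ENNReal.toReal_le_of_le_ofReal (Real.exp_pos _).le (hdec n hn)
    _ ≤ Real.exp (-a * s) := Real.exp_le_exp.2 (by nlinarith [Nat.le_ceil s])

end DensityOfStates

theorem IDS_upper_bound_from_eigenvalue_lower_bound_general
    {V : Type*} (G : SimpleGraph V)
    (F : Finset V) (hFne : F.Nonempty)
    (Pr : Measure (V → Bool)) [IsProbabilityMeasure Pr]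
    (Hmat : ∀ C : Set V, Matrix C C ℝ)
    (a : ℝ) (ha : 0 < a)
    (hdecay : ∀ x ∈ F, ∀ n : ℕ, 1 ≤ n →
      Pr {ω | (cluster G ω x).Infinite ∨ n ≤ Nat.card ↥(cluster G ω x)} ≤
        ENNReal.ofReal (Real.exp (-a * n)))
    (f : ℝ → ℝ)
    (hfanti : StrictAntiOn f (Set.Ici 1))
    (heig : ∀ C : Set V, C.Finite → C.Nonempty → (G.induce C).Connected →
      ∀ μ : ℝ, μ ≠ 0 →
        (∃ φ : ↥C → ℝ, φ ≠ 0 ∧ ∀ x : ↥C, (∑ᶠ y : ↥C, Hmat C x y * φ y) = μ * φ x) →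
        f (Nat.card ↥C : ℝ) ≤ μ) :
    ∀ E s : ℝ, 0 < E → E < f 1 → 1 ≤ s → f s = E →
      IDS G Pr Hmat F E - IDS G Pr Hmat F 0 ≤ Real.exp (-a * s) := by
  rintro E s hE - hs rfl
  simp only [IDS_eq_expect, ← Finset.expect_sub_distrib]
  exact Finset.expect_le hFne fun x hx =>
    integral_specDiag_sub_le heig ha (hdecay x hx) hfanti hs hE

/-- On a quasi-transitive graph (a graph with a free, cofinite group action by
automorphisms, with finite fundamental domain `F`) with subcritical site percolation whose
cluster sizes decay exponentially, `P(|C_x| ≥ n) ≤ exp(−a·n)`, if every finite cluster `C`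
satisfies `λ^#(C) ≥ f(|C|)` for a continuous, strictly decreasing `f : [1,∞) → ℝ⁺` tending to
`0`, then the IDS satisfies `N^#(E) − N^#(0) ≤ exp(−a·f⁻¹(E))` for `0 < E < f 1`. -/
theorem IDS_upper_bound_from_eigenvalue_lower_bound
    {V : Type*} (G : SimpleGraph V)
    (Γ : Type*) [Group Γ] [MulAction Γ V]
    (hact : ∀ (γ : Γ) (x y : V), G.Adj (γ • x) (γ • y) ↔ G.Adj x y)
    (hfree : ∀ (γ : Γ) (x : V), γ • x = x → γ = 1)
    (F : Finset V) (hFne : F.Nonempty) (hcof : ∀ x : V, ∃ γ : Γ, γ • x ∈ F)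
    (Pr : Measure (V → Bool)) [IsProbabilityMeasure Pr]
    (Hmat : ∀ C : Set V, Matrix C C ℝ) (hherm : ∀ C, (Hmat C).IsHermitian)
    (a : ℝ) (ha : 0 < a)
    (hdecay : ∀ x ∈ F, ∀ n : ℕ, 1 ≤ n →
      Pr {ω | (cluster G ω x).Infinite ∨ n ≤ Nat.card ↥(cluster G ω x)} ≤
        ENNReal.ofReal (Real.exp (-a * n)))
    (f : ℝ → ℝ)
    (hfcont : ContinuousOn f (Set.Ici 1)) (hfanti : StrictAntiOn f (Set.Ici 1))
    (hfpos : ∀ s : ℝ, 1 ≤ s → 0 < f s) (hflim : Tendsto f atTop (nhds 0))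
    (heig : ∀ C : Set V, C.Finite → C.Nonempty → (G.induce C).Connected →
      ∀ μ : ℝ, μ ≠ 0 →
        (∃ φ : ↥C → ℝ, φ ≠ 0 ∧ ∀ x : ↥C, (∑ᶠ y : ↥C, Hmat C x y * φ y) = μ * φ x) →
        f (Nat.card ↥C : ℝ) ≤ μ) :
    ∀ E s : ℝ, 0 < E → E < f 1 → 1 ≤ s → f s = E →
      IDS G Pr Hmat F E - IDS G Pr Hmat F 0 ≤ Real.exp (-a * s) :=
  IDS_upper_bound_from_eigenvalue_lower_bound_general G F hFne Pr Hmat a ha hdecay f hfanti heig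
end
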